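/- For every k ≥ 1, the total mass of k-admissible strings equals b^p; that is, Σ_l N_w(k,l) b^{-l} = b^{|w|}. -/

import Mathlib

open scoped BigOperators

/-- Number of (possibly overlapping) occurrences of the block `w` in `X`. -/
def occCount {α : Type*} [DecidableEq α] (w X : List α) : ℕ :=
  ((List.range X.length).filter fun i => (X.drop i).take w.length = w).length

/-- `Nw b w k l`: the number of strings of length `l` over `{0,…,b-1}` containing
exactly `k` occurrences of `w`. -/
def Nw (b : ℕ) (w : List (Fin b)) (k l : ℕ) : ℕ :=
  Fintype.card {f : Fin l → Fin b // occCount w (List.ofFn f) = k}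

/-!
Weight a word `X` over an alphabet of size `b` by `b ^ (-|X|)`. If `S` is prefix-free and every
word outside a set `Z` begins with a word of `S`, then `S` has mass `1` as soon as the length-`n`
part of `Z` has mass tending to `0`: each length-`n` slice has mass `1` and splits into its part
in `Z` and the extensions of the words of `S` of length at most `n`. The words without an
occurrence of `w` form such a negligible `Z`, since their mass at length `n` is at most
`(1 - b ^ (-p)) ^ (n / p)`.

If `c` contains no occurrence of `w`, the words `u` for which the first occurrence of `w` in
`c ++ u` ends at the end of `u` form a complete prefix code, and cutting a word at this first
occurrence shows that `{V | occ(c ++ V) = j + 1}` and `{v | occ(w.tail ++ v) = j}` have the same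
mass. Cutting instead at the last occurrence, the words `w ++ v` with no occurrence of `w` in
`w.tail ++ v` form a complete suffix code, so `{v | occ(w.tail ++ v) = 0}` has mass `b ^ p`
(Kac's return-time formula). Induction on `j` gives `b ^ p` for every `k ≥ 1`.
-/

open Filter Topology
open scoped ENNReal

theorem ENNReal.tsum_iSup_of_monotone {β : Type*} {f : ℕ → β → ℝ≥0∞} (hf : Monotone f) :
    ∑' x, ⨆ n, f n x = ⨆ n, ∑' x, f n x := by
  refine le_antisymm ?_ (iSup_le fun n => ENNReal.tsum_le_tsum fun x => le_iSup (f · x) n)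
  rw [ENNReal.tsum_eq_iSup_sum]
  refine iSup_le fun F => ?_
  rw [ENNReal.finsetSum_iSup_of_monotone fun x _ _ h => hf h x]
  exact iSup_mono fun n => ENNReal.sum_le_tsum F

namespace Words

variable {α : Type*}

def PrefixFree (S : Set (List α)) : Prop := S.Pairwise fun s t => ¬ s <+: t

def SuffixFree (S : Set (List α)) : Prop := S.Pairwise fun s t => ¬ s <:+ t

theorem PrefixFree.eq_of_append_eq {S : Set (List α)} (hS : PrefixFree S) {s t y z : List α}
    (hs : s ∈ S) (ht : t ∈ S) (h : s ++ y = t ++ z) : s = t ∧ y = z := by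
  have hst : s = t := by
    by_contra hne
    rcases le_total s.length t.length with hl | hl
    · exact hS hs ht hne
        (List.prefix_of_prefix_length_le (List.prefix_append s y) (h ▸ List.prefix_append t z) hl)
    · exact hS ht hs (Ne.symm hne)
        (List.prefix_of_prefix_length_le (h ▸ List.prefix_append t z) (List.prefix_append s y) hl)
  subst hst
  exact ⟨rfl, List.append_cancel_left h⟩

variable [Fintype α]

noncomputable def weight (X : List α) : ℝ≥0∞ := (Fintype.card α : ℝ≥0∞)⁻¹ ^ X.length

noncomputable def mass (S : Set (List α)) : ℝ≥0∞ := ∑' X : S, weight (X : List α)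

theorem weight_append (X Y : List α) : weight (X ++ Y) = weight X * weight Y := by
  simp only [weight, List.length_append, pow_add]

theorem weight_ne_zero (X : List α) : weight X ≠ 0 :=
  pow_ne_zero _ (ENNReal.inv_ne_zero.mpr (ENNReal.natCast_ne_top _))

theorem weight_ne_top [Nonempty α] (X : List α) : weight X ≠ ⊤ :=
  ENNReal.pow_ne_top (ENNReal.inv_ne_top.mpr (by simp))

theorem mass_mono {S T : Set (List α)} (h : S ⊆ T) : mass S ≤ mass T :=
  ENNReal.tsum_mono_subtype _ h

theorem mass_union {S T : Set (List α)} (h : Disjoint S T) : mass (S ∪ T) = mass S + mass T :=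
  ENNReal.summable.tsum_union_disjoint h ENNReal.summable

@[simp] theorem mass_empty : mass (∅ : Set (List α)) = 0 := tsum_empty

@[simp] theorem mass_singleton (X : List α) : mass {X} = weight X := tsum_singleton X weight

theorem mass_preimage_reverse (S : Set (List α)) : mass (List.reverse ⁻¹' S) = mass S :=
  calc mass (List.reverse ⁻¹' S)
      = ∑' X : (List.reverse ⁻¹' S : Set (List α)), weight (X : List α).reverse := by
        simp [mass, weight]
    _ = mass S := ((List.reverse_involutive.toPerm _).subtypeEquiv fun _ => Iff.rfl).tsum_eq
        fun X : S => weight (X : List α)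

theorem mass_eq_tsum_card (S : Set (List α)) [DecidablePred (· ∈ S)] :
    mass S = ∑' n, (Fintype.card {f : Fin n → α // List.ofFn f ∈ S} : ℝ≥0∞) *
      (Fintype.card α : ℝ≥0∞)⁻¹ ^ n := by
  rw [mass, tsum_subtype, ← List.equivSigmaTuple.symm.tsum_eq, ENNReal.tsum_sigma']
  refine tsum_congr fun n => ?_
  rw [tsum_fintype, Fintype.card_subtype, Finset.card_filter, Nat.cast_sum, Finset.sum_mul]
  refine Finset.sum_congr rfl fun f _ => ?_
  simp [List.equivSigmaTuple, Set.indicator, weight]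

theorem mass_setOf_length_eq [Nonempty α] (n : ℕ) : mass {X : List α | X.length = n} = 1 := by
  classical
  rw [mass_eq_tsum_card, tsum_eq_single n]
  · simp only [Set.mem_ofPred_eq, List.length_ofFn, Fintype.card_subtype_true]
    rw [Fintype.card_fun, Fintype.card_fin, Nat.cast_pow, ← mul_pow,
      ENNReal.mul_inv_cancel (by simp) (ENNReal.natCast_ne_top _), one_pow]
  · intro m hm
    simp [hm]

theorem mass_biUnion_image_append {S : Set (List α)} (hS : PrefixFree S)
    (B : List α → Set (List α)) :
    mass (⋃ s ∈ S, (s ++ ·) '' B s) = ∑' s : S, weight (s : List α) * mass (B s) := by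
  let F : (Σ s : S, B s) → List α := fun p => p.1 ++ p.2
  have hF : Function.Injective F := by
    rintro ⟨⟨s, hs⟩, ⟨y, hy⟩⟩ ⟨⟨t, ht⟩, ⟨z, hz⟩⟩ h
    obtain ⟨rfl, rfl⟩ := hS.eq_of_append_eq hs ht h
    rfl
  have hrange : Set.range F = ⋃ s ∈ S, (s ++ ·) '' B s := by
    ext X
    simp [F]
  rw [mass, ← hrange, tsum_range weight hF, ENNReal.tsum_sigma']
  simp only [F, weight_append, ENNReal.tsum_mul_left, mass]

theorem mass_image_append_left (s : List α) (B : Set (List α)) :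
    mass ((s ++ ·) '' B) = weight s * mass B := by
  simpa using mass_biUnion_image_append (Set.pairwise_singleton s _) fun _ => B

theorem mass_setOf_add_length_eq [Nonempty α] (s : List α) (n : ℕ) :
    mass {y : List α | s.length + y.length = n} = if s.length ≤ n then 1 else 0 := by
  split_ifs with h
  · rw [← mass_setOf_length_eq (α := α) (n - s.length)]
    congr 1
    ext y
    simp only [Set.mem_ofPred_eq]
    omega
  · rw [← mass_empty (α := α)]
    congr 1
    ext y
    simp only [Set.mem_ofPred_eq, Set.mem_empty_iff_false, iff_false]
    omega

theorem tendsto_tsum_weight_of_length_le (S : Set (List α)) :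
    Tendsto (fun n => ∑' s : S, if (s : List α).length ≤ n then weight (s : List α) else 0)
      atTop (𝓝 (mass S)) := by
  let g : ℕ → S → ℝ≥0∞ := fun n s => if (s : List α).length ≤ n then weight (s : List α) else 0
  have hmono : Monotone g := fun m n hmn s => by
    simp only [g]
    split_ifs <;> first | exact le_rfl | exact zero_le | omega
  have hsup : ∀ s : S, ⨆ n, g n s = weight (s : List α) :=
    fun s => le_antisymm (iSup_le fun n => by simp only [g]; split_ifs <;> simp)
      (le_iSup_of_le (s : List α).length (by simp [g]))
  have := tendsto_atTop_iSup fun m n hmn => ENNReal.tsum_le_tsum (hmono hmn)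
  rwa [← ENNReal.tsum_iSup_of_monotone hmono, tsum_congr hsup] at this

theorem mass_eq_one_of_prefixFree [Nonempty α] {S Z : Set (List α)} (hS : PrefixFree S)
    (hcover : ∀ X ∉ Z, ∃ s ∈ S, s <+: X) (hdisj : ∀ s ∈ S, ∀ X ∈ Z, ¬ s <+: X)
    (hZ : Tendsto (fun n => mass (Z ∩ {X | X.length = n})) atTop (𝓝 0)) : mass S = 1 := by
  have hslice : ∀ n, {X : List α | X.length = n} =
      (Z ∩ {X | X.length = n}) ∪ ⋃ s ∈ S, (s ++ ·) '' {y | s.length + y.length = n} := by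
    intro n
    ext X
    simp only [Set.mem_ofPred_eq, Set.mem_union, Set.mem_inter_iff, Set.mem_iUnion, Set.mem_image]
    constructor
    · intro hX
      by_cases hXZ : X ∈ Z
      · exact Or.inl ⟨hXZ, hX⟩
      · obtain ⟨s, hs, y, rfl⟩ := hcover X hXZ
        exact Or.inr ⟨s, hs, y, by simpa using hX, rfl⟩
    · rintro (⟨-, hX⟩ | ⟨s, -, y, hy, rfl⟩)
      · exact hX
      · simpa using hy
  have hdisj' : ∀ n, Disjoint (Z ∩ {X | X.length = n})
      (⋃ s ∈ S, (s ++ ·) '' {y | s.length + y.length = n}) := by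
    intro n
    simp only [Set.disjoint_left, Set.mem_iUnion, Set.mem_image, not_exists, not_and]
    rintro X ⟨hXZ, -⟩ s hs y - rfl
    exact hdisj s hs _ hXZ (List.prefix_append s y)
  have hsplit : ∀ n, 1 = mass (Z ∩ {X | X.length = n}) +
      ∑' s : S, if (s : List α).length ≤ n then weight (s : List α) else 0 := by
    intro n
    rw [← mass_setOf_length_eq (α := α) n, congrArg mass (hslice n), mass_union (hdisj' n),
      mass_biUnion_image_append hS]
    simp_rw [mass_setOf_add_length_eq, mul_ite, mul_one, mul_zero]
  have := tendsto_nhds_unique (tendsto_const_nhds.congr hsplit)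
    (hZ.add (tendsto_tsum_weight_of_length_le S))
  rwa [zero_add, eq_comm] at this

theorem mass_eq_one_of_suffixFree [Nonempty α] {S Z : Set (List α)} (hS : SuffixFree S)
    (hcover : ∀ X ∉ Z, ∃ s ∈ S, s <:+ X) (hdisj : ∀ s ∈ S, ∀ X ∈ Z, ¬ s <:+ X)
    (hZ : Tendsto (fun n => mass (Z ∩ {X | X.length = n})) atTop (𝓝 0)) : mass S = 1 := by
  rw [← mass_preimage_reverse]
  refine mass_eq_one_of_prefixFree (Z := List.reverse ⁻¹' Z) ?_ ?_ ?_ ?_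
  · intro s hs t ht hne hst
    exact hS hs ht (fun h => hne (List.reverse_injective h))
      (List.reverse_prefix.mp (by simpa using hst))
  · intro X hX
    obtain ⟨s, hs, hsX⟩ := hcover X.reverse hX
    exact ⟨s.reverse, by simpa using hs, by simpa using List.reverse_prefix.mpr hsX⟩
  · intro s hs X hX hsX
    exact hdisj _ hs _ hX (List.reverse_prefix.mp (by simpa using hsX))
  · convert hZ using 2 with n
    rw [← mass_preimage_reverse]
    congr 1
    ext X
    simp

end Words

open Words

section Occurrences

variable {α : Type*} [DecidableEq α] {w : List α}

@[simp] theorem occCount_nil (w : List α) : occCount w [] = 0 := by simp [occCount]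

theorem occCount_cons (w : List α) (a : α) (X : List α) :
    occCount w (a :: X) = (if w <+: a :: X then 1 else 0) + occCount w X := by
  simp only [occCount, List.length_cons, List.range_succ_eq_map, List.filter_cons, List.filter_map,
    List.drop_zero, List.drop_succ_cons, Function.comp_def, List.prefix_iff_eq_take]
  by_cases h : (a :: X).take w.length = w
  · simp [h, add_comm]
  · simp [h, Ne.symm h]

theorem occCount_le_append_left (w X Y : List α) : occCount w Y ≤ occCount w (X ++ Y) := by
  induction X with
  | nil => rfl
  | cons a X ih => rw [List.cons_append, occCount_cons]; omega

theorem occCount_le_append_right (w X Y : List α) : occCount w X ≤ occCount w (X ++ Y) := by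
  induction X with
  | nil => simp
  | cons a X ih =>
    rw [List.cons_append, occCount_cons, occCount_cons]
    have : w <+: a :: X → w <+: a :: (X ++ Y) := fun h => h.trans (List.prefix_append _ Y)
    split_ifs <;> simp_all
    omega

theorem occCount_le_of_isInfix {X Y : List α} (h : X <:+: Y) : occCount w X ≤ occCount w Y := by
  obtain ⟨s, t, rfl⟩ := h
  exact (occCount_le_append_right w X t).trans
    (List.append_assoc s X t ▸ occCount_le_append_left w s _)

theorem occCount_eq_zero_of_length_lt {X : List α} (h : X.length < w.length) :
    occCount w X = 0 := by
  induction X with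
  | nil => simp
  | cons a X ih =>
    have : ¬ w <+: a :: X := fun hw => absurd hw.length_le (by omega)
    rw [occCount_cons, if_neg this, ih (by simp at h; omega)]

theorem occCount_self (hw : w ≠ []) : occCount w w = 1 := by
  obtain ⟨a, t, rfl⟩ := List.exists_cons_of_ne_nil hw
  rw [occCount_cons, if_pos (List.prefix_refl _), occCount_eq_zero_of_length_lt (by simp)]

theorem occCount_pos_of_isInfix (hw : w ≠ []) {X : List α} (h : w <:+: X) : 0 < occCount w X :=
  (occCount_self hw ▸ Nat.one_pos).trans_le (occCount_le_of_isInfix h)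

theorem occCount_append_of_isSuffix (hw : w ≠ []) {U : List α} (h : w <:+ U) (V : List α) :
    occCount w (U ++ V) = occCount w U + occCount w (w.tail ++ V) := by
  obtain ⟨U, rfl⟩ := h
  induction U with
  | nil =>
    obtain ⟨a, t, rfl⟩ := List.exists_cons_of_ne_nil hw
    rw [List.nil_append, occCount_self hw, List.cons_append, occCount_cons,
      if_pos (show a :: t <+: a :: (t ++ V) from List.prefix_append _ V), List.tail_cons]
  | cons a U ih =>
    have hlen : w.length ≤ (a :: (U ++ w)).length := by simp; omega
    have hpre : w <+: a :: (U ++ w) ++ V ↔ w <+: a :: (U ++ w) :=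
      ⟨fun h => List.prefix_of_prefix_length_le h (List.prefix_append _ V) hlen,
        fun h => h.trans (List.prefix_append _ V)⟩
    simp only [List.cons_append, List.append_assoc] at ih hpre ⊢
    rw [occCount_cons, occCount_cons, ih]
    simp only [hpre]
    omega

theorem occCount_append_singleton (X : List α) (a : α) :
    occCount w (X ++ [a]) = occCount w X + if w <:+ X ++ [a] then 1 else 0 := by
  induction X with
  | nil =>
    have : w <+: [a] ↔ w <:+ [a] := by
      rcases w with _ | ⟨c, _ | ⟨d, t⟩⟩ <;> simp [List.suffix_cons_iff, eq_comm]
    simp [occCount_cons, this]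
  | cons c X ih =>
    rw [List.cons_append, occCount_cons, occCount_cons, ih]
    by_cases hlen : w.length ≤ (c :: X).length
    · have hpre : w <+: c :: (X ++ [a]) ↔ w <+: c :: X :=
        ⟨fun h => List.prefix_of_prefix_length_le h (List.prefix_append (c :: X) [a]) hlen,
          fun h => h.trans (List.prefix_append _ _)⟩
      have hsuf : w <:+ c :: (X ++ [a]) ↔ w <:+ X ++ [a] := by
        rw [List.suffix_cons_iff, or_iff_right]
        rintro rfl
        simp at hlen
      simp only [hpre, hsuf]
      omega
    · have hpre : ¬ w <+: c :: X := fun h => hlen h.length_le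
      have hsuf : ¬ w <:+ X ++ [a] := fun h => hlen (by simpa using h.length_le)
      have hiff : w <+: c :: (X ++ [a]) ↔ w <:+ c :: (X ++ [a]) :=
        ⟨fun h => (h.eq_of_length_le (by simp at hlen ⊢; omega)) ▸ List.suffix_refl _,
          fun h => (h.eq_of_length_le (by simp at hlen ⊢; omega)) ▸ List.prefix_refl _⟩
      simp only [hpre, hsuf, hiff]
      omega

end Occurrences

section FirstHits

variable {α : Type*} [DecidableEq α] {w c : List α}

def firstHits (w c : List α) : Set (List α) := {u | occCount w (c ++ u) = 1 ∧ w <:+ c ++ u}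

theorem occCount_append_of_mem_firstHits (hw : w ≠ []) {u : List α} (hu : u ∈ firstHits w c)
    (v : List α) : occCount w (c ++ (u ++ v)) = 1 + occCount w (w.tail ++ v) := by
  rw [← List.append_assoc, occCount_append_of_isSuffix hw hu.2, hu.1]

theorem prefixFree_firstHits (hw : w ≠ []) : PrefixFree (firstHits w c) := by
  rintro u hu _ hu' hne ⟨v, rfl⟩
  have hv : v ≠ [] := by rintro rfl; exact hne (List.append_nil u).symm
  have hzero : occCount w (w.tail ++ v) = 0 := by
    have := occCount_append_of_mem_firstHits hw hu v
    rw [hu'.1] at this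
    omega
  have htail : w.tail ++ v <:+ c ++ (u ++ v) := by
    rw [← List.append_assoc]
    exact List.suffix_append_self_iff.mpr ((List.tail_suffix w).trans hu.2)
  have hlen : w.length ≤ (w.tail ++ v).length := by
    have := List.length_pos_iff.mpr hv
    simp only [List.length_append, List.length_tail]
    omega
  have := occCount_pos_of_isInfix hw (List.suffix_of_suffix_length_le hu'.2 htail hlen).isInfix
  omega

theorem exists_prefix_mem_firstHits (hc : occCount w c = 0) {V : List α}
    (hV : occCount w (c ++ V) ≠ 0) : ∃ u ∈ firstHits w c, u <+: V := by
  induction V using List.reverseRecOn with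
  | nil => simp_all
  | append_singleton V a ih =>
    by_cases h : occCount w (c ++ V) = 0
    · rw [← List.append_assoc, occCount_append_singleton, h] at hV
      refine ⟨V ++ [a], ?_, List.prefix_refl _⟩
      rw [firstHits, Set.mem_ofPred_eq, ← List.append_assoc, occCount_append_singleton, h]
      split_ifs at hV ⊢ with hs
      · exact ⟨rfl, hs⟩
      · exact absurd rfl hV
    · obtain ⟨u, hu, huV⟩ := ih h
      exact ⟨u, hu, huV.trans (List.prefix_append _ _)⟩

theorem setOf_occCount_append_eq_succ (hw : w ≠ []) (hc : occCount w c = 0) (j : ℕ) :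
    {V | occCount w (c ++ V) = j + 1} =
      ⋃ u ∈ firstHits w c, (u ++ ·) '' {v | occCount w (w.tail ++ v) = j} := by
  ext V
  simp only [Set.mem_ofPred_eq, Set.mem_iUnion, Set.mem_image]
  constructor
  · intro hV
    obtain ⟨u, hu, v, rfl⟩ := exists_prefix_mem_firstHits hc (by omega : occCount w (c ++ V) ≠ 0)
    rw [occCount_append_of_mem_firstHits hw hu] at hV
    exact ⟨u, hu, v, by omega, rfl⟩
  · rintro ⟨u, hu, v, hv, rfl⟩
    rw [occCount_append_of_mem_firstHits hw hu, hv, add_comm]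

end FirstHits

section Mass

variable {α : Type*} [Fintype α] [DecidableEq α] {w c : List α}

theorem mass_setOf_occCount_eq_zero_le (hw : w ≠ []) (n : ℕ) :
    mass ({X | occCount w X = 0} ∩ {X | X.length = w.length + n}) ≤
      (1 - weight w) * mass ({X | occCount w X = 0} ∩ {X | X.length = n}) := by
  have : Nonempty α := ⟨w.head hw⟩
  set L : Set (List α) := {X | X.length = w.length}
  have hsub : {X | occCount w X = 0} ∩ {X | X.length = w.length + n} ⊆
      ⋃ s ∈ L \ {w}, (s ++ ·) '' ({X | occCount w X = 0} ∩ {X | X.length = n}) := by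
    rintro X ⟨hX, hlen⟩
    simp only [Set.mem_ofPred_eq] at hX hlen
    simp only [Set.mem_iUnion, Set.mem_image, Set.mem_sdiff, Set.mem_singleton_iff]
    refine ⟨X.take w.length, ⟨by simp [L, hlen], fun h => ?_⟩, X.drop w.length,
      ⟨?_, by simp [hlen]⟩, List.take_append_drop _ _⟩
    · have := occCount_pos_of_isInfix hw (h ▸ List.take_prefix _ X).isInfix
      omega
    · have := occCount_le_of_isInfix (w := w) (List.drop_suffix w.length X).isInfix
      simp only [Set.mem_ofPred_eq]
      omega
  have hL : PrefixFree (L \ {w}) := fun s hs t ht hne hst =>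
    hne (hst.eq_of_length (hs.1.trans ht.1.symm))
  have hmassL : mass (L \ {w}) = 1 - weight w := by
    have := mass_union (Set.disjoint_sdiff_left : Disjoint (L \ {w}) {w})
    rw [Set.sdiff_union_of_subset (Set.singleton_subset_iff.mpr (show w ∈ L from rfl)),
      mass_setOf_length_eq, mass_singleton] at this
    exact (ENNReal.sub_eq_of_eq_add (weight_ne_top w) this).symm
  calc _ ≤ _ := mass_mono hsub
    _ = mass (L \ {w}) * mass ({X | occCount w X = 0} ∩ {X | X.length = n}) := by
      rw [mass_biUnion_image_append hL, ENNReal.tsum_mul_right]; rfl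
    _ = _ := by rw [hmassL]

theorem mass_setOf_occCount_eq_zero_le_pow (hw : w ≠ []) (q r : ℕ) :
    mass ({X | occCount w X = 0} ∩ {X | X.length = q * w.length + r}) ≤ (1 - weight w) ^ q := by
  have : Nonempty α := ⟨w.head hw⟩
  induction q with
  | zero => simpa using (mass_mono Set.inter_subset_right).trans_eq (mass_setOf_length_eq r)
  | succ q ih =>
    rw [add_mul, one_mul, add_comm _ w.length, add_assoc, pow_succ']
    exact (mass_setOf_occCount_eq_zero_le hw _).trans (by gcongr)

theorem tendsto_mass_inter_length_of_subset (hw : w ≠ []) {Z : Set (List α)}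
    (hZ : Z ⊆ {X | occCount w X = 0}) :
    Tendsto (fun n => mass (Z ∩ {X | X.length = n})) atTop (𝓝 0) := by
  have hlt : 1 - weight w < 1 :=
    ENNReal.sub_lt_self ENNReal.one_ne_top one_ne_zero (weight_ne_zero w)
  refine tendsto_of_tendsto_of_tendsto_of_le_of_le tendsto_const_nhds
    ((ENNReal.tendsto_pow_atTop_nhds_zero_of_lt_one hlt).comp
      (Nat.tendsto_div_const_atTop (List.length_pos_iff.mpr hw).ne')) (fun _ => zero_le) fun n => ?_
  have hn := mass_setOf_occCount_eq_zero_le_pow hw (n / w.length) (n % w.length)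
  rw [Nat.div_add_mod'] at hn
  exact (mass_mono (Set.inter_subset_inter_left _ hZ)).trans hn

theorem mass_firstHits (hw : w ≠ []) (hc : occCount w c = 0) : mass (firstHits w c) = 1 := by
  have : Nonempty α := ⟨w.head hw⟩
  refine mass_eq_one_of_prefixFree (Z := {V | occCount w (c ++ V) = 0}) (prefixFree_firstHits hw)
    (fun V hV => exists_prefix_mem_firstHits hc hV) (fun u hu V hV huV => ?_)
    (tendsto_mass_inter_length_of_subset hw fun V hV => ?_)
  · have := occCount_le_of_isInfix (w := w) ((List.prefix_append_right_inj c).mpr huV).isInfix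
    simp_all [firstHits]
  · have := occCount_le_append_left w c V
    simp_all

theorem mass_occCount_append_eq_succ (hw : w ≠ []) (hc : occCount w c = 0) (j : ℕ) :
    mass {V | occCount w (c ++ V) = j + 1} = mass {v | occCount w (w.tail ++ v) = j} := by
  rw [setOf_occCount_append_eq_succ hw hc, mass_biUnion_image_append (prefixFree_firstHits hw),
    ENNReal.tsum_mul_right]
  change mass (firstHits w c) * _ = _
  rw [mass_firstHits hw hc, one_mul]

end Mass

section LastHits

variable {α : Type*} [DecidableEq α] {w : List α}

theorem suffixFree_image_append_setOf_occCount_tail_eq_zero (hw : w ≠ []) :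
    SuffixFree ((w ++ ·) '' {v | occCount w (w.tail ++ v) = 0}) := by
  rintro _ ⟨v, -, rfl⟩ _ ⟨v', hv', rfl⟩ hne ⟨y, hy⟩
  simp only at hy hne
  have hy0 : y ≠ [] := by rintro rfl; exact hne hy
  have htail := congrArg List.tail hy
  rw [List.tail_append_of_ne_nil hy0, List.tail_append_of_ne_nil hw] at htail
  have := occCount_pos_of_isInfix hw ⟨y.tail, v, by rw [List.append_assoc, htail]⟩
  simp_all

theorem exists_suffix_of_occCount_ne_zero (hw : w ≠ []) {X : List α} (hX : occCount w X ≠ 0) :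
    ∃ v, occCount w (w.tail ++ v) = 0 ∧ w ++ v <:+ X := by
  induction X with
  | nil => simp at hX
  | cons a X ih =>
    by_cases h : occCount w X = 0
    · rw [occCount_cons, h] at hX
      split_ifs at hX with hp
      · obtain ⟨v, hv⟩ := hp
        have htail := congrArg List.tail hv
        rw [List.tail_append_of_ne_nil hw, List.tail_cons] at htail
        exact ⟨v, htail ▸ h, hv ▸ List.suffix_refl _⟩
      · exact absurd rfl hX
    · obtain ⟨v, hv, hsuf⟩ := ih h
      exact ⟨v, hv, hsuf.trans (List.suffix_cons a X)⟩

variable [Fintype α]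

theorem mass_setOf_occCount_tail_eq_zero (hw : w ≠ []) :
    mass {v | occCount w (w.tail ++ v) = 0} = (Fintype.card α : ℝ≥0∞) ^ w.length := by
  have : Nonempty α := ⟨w.head hw⟩
  have h := mass_eq_one_of_suffixFree (Z := {X | occCount w X = 0})
    (suffixFree_image_append_setOf_occCount_tail_eq_zero hw)
    (fun X hX => by
      obtain ⟨v, hv, hsuf⟩ := exists_suffix_of_occCount_ne_zero hw hX
      exact ⟨w ++ v, ⟨v, hv, rfl⟩, hsuf⟩)
    (by
      rintro _ ⟨v, -, rfl⟩ X hX hsuf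
      exact (occCount_pos_of_isInfix hw
        ((List.prefix_append w v).isInfix.trans hsuf.isInfix)).ne' hX)
    (tendsto_mass_inter_length_of_subset hw subset_rfl)
  rw [mass_image_append_left, weight, mul_comm] at h
  rw [ENNReal.eq_inv_of_mul_eq_one_left h, ← ENNReal.inv_pow, inv_inv]

theorem mass_setOf_occCount_tail_eq (hw : w ≠ []) (j : ℕ) :
    mass {v | occCount w (w.tail ++ v) = j} = (Fintype.card α : ℝ≥0∞) ^ w.length := by
  induction j with
  | zero => exact mass_setOf_occCount_tail_eq_zero hw
  | succ j ih =>
    rw [← ih, mass_occCount_append_eq_succ hw (occCount_eq_zero_of_length_lt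
      (by rw [List.length_tail]; have := List.length_pos_iff.mpr hw; omega))]

theorem mass_setOf_occCount_eq_succ (hw : w ≠ []) (k : ℕ) :
    mass {X | occCount w X = k + 1} = (Fintype.card α : ℝ≥0∞) ^ w.length := by
  simpa using (mass_occCount_append_eq_succ hw (occCount_nil w) k).trans
    (mass_setOf_occCount_tail_eq hw k)

end LastHits

theorem stmt10_general (b : ℕ) (w : List (Fin b)) (hw : 1 ≤ w.length)
    (k : ℕ) (hk : 1 ≤ k) :
    ∑' l : ℕ, (Nw b w k l : ℝ) * ((b : ℝ)⁻¹) ^ l = (b : ℝ) ^ w.length := by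
  have hw' : w ≠ [] := List.ne_nil_of_length_pos hw
  obtain ⟨k, rfl⟩ : ∃ j, k = j + 1 := ⟨k - 1, by omega⟩
  have h := mass_setOf_occCount_eq_succ hw' k
  rw [mass_eq_tsum_card, Fintype.card_fin] at h
  change ∑' l, (Nw b w (k + 1) l : ℝ≥0∞) * (b : ℝ≥0∞)⁻¹ ^ l = (b : ℝ≥0∞) ^ w.length at h
  have hfin : ∀ l, (Nw b w (k + 1) l : ℝ≥0∞) * (b : ℝ≥0∞)⁻¹ ^ l ≠ ⊤ := by
    have : b ≠ 0 := by rintro rfl; exact (w.head hw').elim0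
    intro l
    finiteness
  have := congrArg ENNReal.toReal h
  rw [ENNReal.tsum_toReal_eq hfin] at this
  simpa using this

/-- For `k ≥ 1` the total mass of the `k`-admissible strings equals `b^p`. -/
theorem stmt10 (b : ℕ) (hb : 1 < b) (w : List (Fin b)) (hw : 1 ≤ w.length)
    (k : ℕ) (hk : 1 ≤ k) :
    ∑' l : ℕ, (Nw b w k l : ℝ) * ((b : ℝ)⁻¹) ^ l = (b : ℝ) ^ w.length :=
  stmt10_general b w hw k hk
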